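/- Let T : ℝ⁴ → ℝ⁴ be the linear map T(L₁, L₂, L₃, L₄) = (L₁, L₁ + (1/3)L₂, (2/3)L₂, L₃), and let ζ = (1, 3/2, 1, 1). Then there exists r₀ ∈ (0, 1/2) such that for every h > 0 there exists M₀ ≥ 1 for which the truncated sector C̃ = { s(ζ + ε) : s ≥ M₀, ε ∈ ℝ⁴, ε₁ = 0, |ε_i| ≤ r₀ for all i } has the following two properties: (a) every L = (L₁, L₂, L₃, L₄) ∈ C̃ satisfies 2L₁ − L₃ ≥ 0 and 2L₁ + 2L₂ + 2L₃ − L₄ ≥ 0; (b) the affine map L ↦ T L + h e₂ maps C̃ into itself, where e₂ = (0,1,0,0). -/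

import Mathlib

open Set

noncomputable section

/-- The linear evolution `T(L₁,L₂,L₃,L₄) = (L₁, L₁ + L₂/3, (2/3)L₂, L₃)`. -/
def Tmap4 (L : Fin 4 → ℝ) : Fin 4 → ℝ :=
  ![L 0, L 0 + (1 / 3) * L 1, (2 / 3) * L 1, L 2]

/-- The vector `ζ = (1, 3/2, 1, 1)`. -/
def zeta4 : Fin 4 → ℝ := ![1, 3 / 2, 1, 1]

/-- The truncated sector around the ray through `ζ`. -/
def sector4 (r₀ M₀ : ℝ) : Set (Fin 4 → ℝ) :=
  {L | ∃ (s : ℝ) (ε : Fin 4 → ℝ), M₀ ≤ s ∧ ε 0 = 0 ∧ (∀ i, |ε i| ≤ r₀) ∧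
    L = fun i => s * (zeta4 i + ε i)}

/-!
`ζ` is a fixed point of the linear map `T`, so `T (s (ζ + ε)) + h e₂ = s (ζ + T ε + (h / s) e₂)`:
the evolution stays on the same ray parameter `s` and only moves the perturbation. On perturbations
with `ε₁ = 0`, `T` contracts the remaining coordinates by the factors `1/3, 2/3, 1`, which leaves
room `2 r₀ / 3` in the second coordinate to absorb the drift `h / s` once `s ≥ 3 h / (2 r₀)`.
-/

lemma Tmap4_add (x y : Fin 4 → ℝ) : Tmap4 (x + y) = Tmap4 x + Tmap4 y := by
  funext i
  fin_cases i <;> simp [Tmap4] <;> ring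

lemma Tmap4_smul (s : ℝ) (x : Fin 4 → ℝ) : Tmap4 (s • x) = s • Tmap4 x := by
  funext i
  fin_cases i <;> simp [Tmap4] <;> ring

lemma Tmap4_zeta4 : Tmap4 zeta4 = zeta4 := by
  funext i
  fin_cases i <;> simp [Tmap4, zeta4]; norm_num

lemma admissible_of_mem_sector4 {r₀ M₀ : ℝ} (hr₀ : r₀ ≤ 1) (hM₀ : 0 ≤ M₀) {L : Fin 4 → ℝ}
    (hL : L ∈ sector4 r₀ M₀) :
    0 ≤ 2 * L 0 - L 2 ∧ 0 ≤ 2 * L 0 + 2 * L 1 + 2 * L 2 - L 3 := by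
  obtain ⟨s, ε, hs, hε₀, hε, rfl⟩ := hL
  have hs₀ : 0 ≤ s := hM₀.trans hs
  obtain ⟨hε₁, -⟩ := abs_le.mp (hε 1)
  obtain ⟨hε₂, hε₂'⟩ := abs_le.mp (hε 2)
  obtain ⟨-, hε₃⟩ := abs_le.mp (hε 3)
  simp only [zeta4, Matrix.cons_val, hε₀]
  constructor <;> nlinarith

lemma abs_Tmap4_add_le {r δ : ℝ} {ε : Fin 4 → ℝ} (hε₀ : ε 0 = 0) (hε : ∀ i, |ε i| ≤ r)
    (hδ₀ : 0 ≤ δ) (hδ : δ ≤ 2 * r / 3) (i : Fin 4) :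
    |(Tmap4 ε + δ • (![0, 1, 0, 0] : Fin 4 → ℝ)) i| ≤ r := by
  have hε₁ := abs_le.mp (hε 1)
  fin_cases i <;> simp [Tmap4, hε₀]
  · exact (abs_nonneg _).trans (hε 0)
  · exact abs_le.mpr ⟨by linarith, by linarith⟩
  · rw [abs_of_pos (by norm_num : (0 : ℝ) < 2 / 3)]; linarith [hε 1]
  · exact hε 2

lemma mapsTo_sector4 {r₀ M₀ h : ℝ} (hM₀ : 0 < M₀) (hh : 0 ≤ h) (hhM₀ : 3 * h ≤ 2 * r₀ * M₀) :
    MapsTo (fun L => Tmap4 L + h • (![0, 1, 0, 0] : Fin 4 → ℝ))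
      (sector4 r₀ M₀) (sector4 r₀ M₀) := by
  rintro L ⟨s, ε, hs, hε₀, hε, rfl⟩
  have hs₀ : 0 < s := hM₀.trans_le hs
  have hδ : h / s ≤ 2 * r₀ / 3 := by
    rw [div_le_iff₀ hs₀]; nlinarith
  refine ⟨s, Tmap4 ε + (h / s) • ![0, 1, 0, 0], hs, by simp [Tmap4, hε₀],
    abs_Tmap4_add_le hε₀ hε (div_nonneg hh hs₀.le) hδ, ?_⟩
  change Tmap4 (s • (zeta4 + ε)) + _ = s • (zeta4 + _)
  rw [Tmap4_smul, Tmap4_add, Tmap4_zeta4, smul_add, smul_add, smul_add, smul_smul,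
    mul_div_cancel₀ _ hs₀.ne', add_assoc]

/-- Admissibility and invariance of a truncated sector under the affine
parameter evolution `L ↦ T L + h e₂`. -/
theorem admissible_truncated_sector :
    ∃ r₀ : ℝ, 0 < r₀ ∧ r₀ < 1 / 2 ∧
      ∀ h : ℝ, 0 < h → ∃ M₀ : ℝ, 1 ≤ M₀ ∧
        (∀ L ∈ sector4 r₀ M₀,
          0 ≤ 2 * L 0 - L 2 ∧ 0 ≤ 2 * L 0 + 2 * L 1 + 2 * L 2 - L 3) ∧
        (∀ L ∈ sector4 r₀ M₀,
          (fun i => Tmap4 L i + h * (![0, 1, 0, 0] : Fin 4 → ℝ) i) ∈ sector4 r₀ M₀) := by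
  refine ⟨1 / 4, by norm_num, by norm_num, fun h hh => ⟨max 1 (6 * h), le_max_left _ _, ?_, ?_⟩⟩
  · exact fun L => admissible_of_mem_sector4 (by norm_num) (by positivity)
  · have hhM₀ : 3 * h ≤ 2 * (1 / 4) * max 1 (6 * h) := by
      linarith [le_max_right 1 (6 * h)]
    exact mapsTo_sector4 (by positivity) hh.le hhM₀

end
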